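/- Let A, B, C be subspaces of E with A ⊊ B ⊊ C (A nonempty). Then there is a unique subspace B' of E such that B ∩ B' = A, B ⊥g B', and B ⊔ B' = C. -/

import Mathlib

/-- `Perp X Y`: every vector in the direction of `X` is orthogonal to every
vector in the direction of `Y`. -/
def Perp {E : Type*} [NormedAddCommGroup E] [InnerProductSpace ℝ E]
    (X Y : AffineSubspace ℝ E) : Prop :=
  ∀ u ∈ X.direction, ∀ v ∈ Y.direction, (inner ℝ u v : ℝ) = 0

/-- `PerpX X Y`: `X ⊥ Y` and `X ∩ Y ≠ ∅`. -/
def PerpX {E : Type*} [NormedAddCommGroup E] [InnerProductSpace ℝ E]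
    (X Y : AffineSubspace ℝ E) : Prop :=
  Perp X Y ∧ ((X : Set E) ∩ (Y : Set E)).Nonempty

/-- `PerpGo X₁ X₂`: the relation `⊥g∘`. -/
def PerpGo {E : Type*} [NormedAddCommGroup E] [InnerProductSpace ℝ E]
    (X₁ X₂ : AffineSubspace ℝ E) : Prop :=
  ∃ q : E, q ∈ X₁ ⊓ X₂ ∧ ∃ Z₁ Z₂ : AffineSubspace ℝ E,
    q ∈ Z₁ ∧ q ∈ Z₂ ∧ PerpX Z₁ (X₁ ⊓ X₂) ∧ PerpX Z₂ (X₁ ⊓ X₂) ∧ PerpX Z₁ Z₂ ∧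
    (X₁ ⊓ X₂) ⊔ Z₁ = X₁ ∧ (X₁ ⊓ X₂) ⊔ Z₂ = X₂

/-- `PerpG X₁ X₂`: the relation `⊥g`. -/
def PerpG {E : Type*} [NormedAddCommGroup E] [InnerProductSpace ℝ E]
    (X₁ X₂ : AffineSubspace ℝ E) : Prop :=
  PerpGo X₁ X₂ ∧ X₁ ⊓ X₂ ≠ X₁ ∧ X₁ ⊓ X₂ ≠ X₂

/-- Dimension of an affine subspace: the dimension of its direction. -/
noncomputable def adim {E : Type*} [NormedAddCommGroup E] [InnerProductSpace ℝ E]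
    (X : AffineSubspace ℝ E) : ℕ :=
  Module.finrank ℝ X.direction

variable {E : Type*} [NormedAddCommGroup E] [InnerProductSpace ℝ E] [FiniteDimensional ℝ E]

/-
The partner is forced: if `B ⊓ B' = A` and `B ⊥g B'` with witnesses `Z₁, Z₂`, then `Z₂` is
orthogonal to `A ⊔ Z₁ = B`, and `B ⊔ B' = C` makes its direction a complement of `dir B` in
`dir C`; an orthogonal complement inside `dir C` is unique, so `dir B' = dir A ⊔ (dir B)ᗮ ⊓ dir C`,
and `B'` contains `A`. Conversely the affine subspace through `A` with that direction works, with
witnesses in the directions `(dir A)ᗮ ⊓ dir B` and `(dir B)ᗮ ⊓ dir C`.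
-/

open AffineSubspace

theorem Submodule.sup_inf_eq_left_of_isOrtho {𝕜 V : Type*} [RCLike 𝕜] [NormedAddCommGroup V]
    [InnerProductSpace 𝕜 V] {K W U : Submodule 𝕜 V} (hK : K ≤ U) (hW : W ⟂ U) :
    (K ⊔ W) ⊓ U = K := by
  rw [sup_inf_assoc_of_le W hK, disjoint_iff.mp hW.disjoint, sup_bot_eq]

theorem Submodule.eq_orthogonal_inf_of_sup_eq {𝕜 V : Type*} [RCLike 𝕜] [NormedAddCommGroup V]
    [InnerProductSpace 𝕜 V] {U W Y : Submodule 𝕜 V} (hY : Y ⟂ U) (hUY : U ⊔ Y = W) :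
    Y = Uᗮ ⊓ W := by
  rw [← hUY, sup_comm, inf_comm, sup_inf_eq_left_of_isOrtho hY U.isOrtho_orthogonal_right]

namespace AffineSubspace

variable {k V P : Type*} [Ring k] [AddCommGroup V] [Module k V] [AddTorsor V P]

theorem direction_sup_of_mem {s₁ s₂ : AffineSubspace k P} {p : P} (h₁ : p ∈ s₁) (h₂ : p ∈ s₂) :
    (s₁ ⊔ s₂).direction = s₁.direction ⊔ s₂.direction := by
  simp [direction_sup h₁ h₂]

theorem sup_mk' {s : AffineSubspace k P} {p : P} (hp : p ∈ s) (d : Submodule k V) :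
    s ⊔ mk' p d = mk' p (s.direction ⊔ d) := by
  rw [← mk'_eq (le_sup_left (b := mk' p d) hp),
    direction_sup_of_mem hp (self_mem_mk' p d), direction_mk']

end AffineSubspace

section Perpendicularity

variable {F : Type*} [NormedAddCommGroup F] [InnerProductSpace ℝ F]

theorem perp_iff_isOrtho {X Y : AffineSubspace ℝ F} : Perp X Y ↔ X.direction ⟂ Y.direction :=
  Submodule.isOrtho_iff_inner_eq.symm

theorem perpX_mk' {X : AffineSubspace ℝ F} {q : F} (hq : q ∈ X) {D : Submodule ℝ F}
    (hD : D ⟂ X.direction) : PerpX (mk' q D) X :=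
  ⟨perp_iff_isOrtho.2 (by rwa [direction_mk']), q, self_mem_mk' q D, hq⟩

theorem perpGo_of_direction_eq_sup {X₁ X₂ Y : AffineSubspace ℝ F} (hY : X₁ ⊓ X₂ = Y) {q : F}
    (hq : q ∈ Y) {D₁ D₂ : Submodule ℝ F} (h₁ : D₁ ⟂ Y.direction) (h₂ : D₂ ⟂ Y.direction)
    (h₁₂ : D₁ ⟂ D₂) (hX₁ : X₁.direction = Y.direction ⊔ D₁)
    (hX₂ : X₂.direction = Y.direction ⊔ D₂) : PerpGo X₁ X₂ := by
  subst hY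
  exact ⟨q, hq, mk' q D₁, mk' q D₂, self_mem_mk' q D₁, self_mem_mk' q D₂, perpX_mk' hq h₁,
    perpX_mk' hq h₂, perpX_mk' (self_mem_mk' q D₂) (by rwa [direction_mk']),
    by rw [sup_mk' hq, ← hX₁, mk'_eq hq.1], by rw [sup_mk' hq, ← hX₂, mk'_eq hq.2]⟩

theorem PerpGo.exists_isOrtho_direction_eq_sup {X₁ X₂ : AffineSubspace ℝ F}
    (h : PerpGo X₁ X₂) :
    ∃ D : Submodule ℝ F, D ⟂ X₁.direction ∧ X₂.direction = (X₁ ⊓ X₂).direction ⊔ D := by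
  obtain ⟨q, hq, Z₁, Z₂, hq₁, hq₂, -, hZ₂, hZ₁₂, hX₁, hX₂⟩ := h
  refine ⟨Z₂.direction, ?_, (congrArg direction hX₂).symm.trans (direction_sup_of_mem hq hq₂)⟩
  rw [← hX₁, direction_sup_of_mem hq hq₁]
  exact Submodule.isOrtho_sup_right.2
    ⟨perp_iff_isOrtho.1 hZ₂.1, (perp_iff_isOrtho.1 hZ₁₂.1).symm⟩

noncomputable def orthogonalPartner (A B C : AffineSubspace ℝ F) (a : F) : AffineSubspace ℝ F :=
  mk' a (A.direction ⊔ B.directionᗮ ⊓ C.direction)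

theorem eq_orthogonalPartner_of_perpGo {A B C B' : AffineSubspace ℝ F} {a : F} (ha : a ∈ A)
    (hinf : B ⊓ B' = A) (hperp : PerpGo B B') (hsup : B ⊔ B' = C) :
    B' = orthogonalPartner A B C a := by
  obtain ⟨D, hDB, hB'⟩ := hperp.exists_isOrtho_direction_eq_sup
  rw [hinf] at hB'
  have ha' : a ∈ B ⊓ B' := hinf ▸ ha
  have hAB : A.direction ≤ B.direction := direction_le (hinf ▸ inf_le_left)
  have hC : B.direction ⊔ D = C.direction := by
    rw [← hsup, direction_sup_of_mem ha'.1 ha'.2, hB', ← sup_assoc, sup_eq_left.2 hAB]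
  rw [← mk'_eq ha'.2, hB', Submodule.eq_orthogonal_inf_of_sup_eq hDB hC, orthogonalPartner]

theorem inf_orthogonalPartner {A B C : AffineSubspace ℝ F} {a : F} (ha : a ∈ A) (hAB : A ≤ B) :
    B ⊓ orthogonalPartner A B C a = A := by
  have ha' : a ∈ B ⊓ orthogonalPartner A B C a := ⟨hAB ha, self_mem_mk' _ _⟩
  refine ext_of_direction_eq ?_ ⟨a, ha', ha⟩
  rw [direction_inf_of_mem ha'.1 ha'.2, orthogonalPartner, direction_mk', inf_comm]
  exact Submodule.sup_inf_eq_left_of_isOrtho (direction_le hAB)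
    ((Submodule.isOrtho_orthogonal_left _).mono_left inf_le_left)

end Perpendicularity

section Existence

variable {A B C : AffineSubspace ℝ E} {a : E}

theorem sup_orthogonalPartner (ha : a ∈ A) (hAB : A ≤ B) (hBC : B ≤ C) :
    B ⊔ orthogonalPartner A B C a = C := by
  rw [orthogonalPartner, sup_mk' (hAB ha), ← sup_assoc, sup_eq_left.2 (direction_le hAB),
    Submodule.sup_orthogonal_inf_of_hasOrthogonalProjection (direction_le hBC),
    mk'_eq (hBC (hAB ha))]

theorem perpG_orthogonalPartner (ha : a ∈ A) (hAB : A < B) (hBC : B < C) :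
    PerpG B (orthogonalPartner A B C a) := by
  have hinf := inf_orthogonalPartner (C := C) ha hAB.le
  have hAB' : A.direction ≤ B.direction := direction_le hAB.le
  have hW : B.directionᗮ ⊓ C.direction ⟂ B.direction :=
    (Submodule.isOrtho_orthogonal_left _).mono_left inf_le_left
  have hdir : (orthogonalPartner A B C a).direction = A.direction ⊔ B.directionᗮ ⊓ C.direction :=
    direction_mk' _ _
  refine ⟨?_, by rw [hinf]; exact hAB.ne, fun hdegen => ?_⟩
  · exact perpGo_of_direction_eq_sup hinf ha (D₁ := A.directionᗮ ⊓ B.direction)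
      ((Submodule.isOrtho_orthogonal_left _).mono_left inf_le_left) (hW.mono_right hAB')
      (hW.symm.mono_left inf_le_right)
      (Submodule.sup_orthogonal_inf_of_hasOrthogonalProjection hAB').symm hdir
  · have hWA : B.directionᗮ ⊓ C.direction ≤ A.direction := by
      rw [← hinf, hdegen, hdir]
      exact le_sup_right
    have hW0 : B.directionᗮ ⊓ C.direction = ⊥ :=
      Submodule.isOrtho_self.1 (hW.mono_right (hWA.trans hAB'))
    refine (direction_lt_of_nonempty hBC ⟨a, hAB.le ha⟩).ne ?_
    rw [← Submodule.sup_orthogonal_inf_of_hasOrthogonalProjection (direction_le hBC.le), hW0,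
      sup_bot_eq]

end Existence

theorem stmt8 (A B C : AffineSubspace ℝ E)
    (hA : (A : Set E).Nonempty) (hAB : A < B) (hBC : B < C) :
    ∃! B' : AffineSubspace ℝ E, B ⊓ B' = A ∧ PerpG B B' ∧ B ⊔ B' = C := by
  obtain ⟨a, ha⟩ := hA
  refine ⟨orthogonalPartner A B C a, ⟨inf_orthogonalPartner ha hAB.le,
    perpG_orthogonalPartner ha hAB hBC, sup_orthogonalPartner ha hAB.le hBC.le⟩, ?_⟩
  rintro B' ⟨hinf, hperp, hsup⟩
  exact eq_orthogonalPartner_of_perpGo ha hinf hperp.1 hsup
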